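/- Let n ∈ ℕ, r > 0, and let f : EuclideanSpace ℝ (Fin n) → ℂ be infinitely differentiable on the open Euclidean ball B(0, r). Suppose there is m : (Fin n → ℕ) → ℝ such that ‖∂^α f x‖ ≤ m α for every multi-index α and every x ∈ B(0, r), and such that the family α ↦ m α · r^{|α|} / α! is summable. Then for every t ∈ B(0, r) the Taylor series of f at 0 converges to f: f t = ∑' α, (∂^α f 0) · t^α / α!, where the family α ↦ (∂^α f 0) · t^α / α! is summable; consequently, with c_α := ∂^α f 0, the family α ↦ ‖c_α‖ · r^{|α|} / α! is summable with ∑' α, ‖c_α‖ · r^{|α|} / α! ≤ ∑' α, m α · r^{|α|} / α!. -/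

import Mathlib

open scoped BigOperators
open Metric

/-- The tuple of `∑ i, α i` standard basis vectors of `EuclideanSpace ℝ (Fin n)` in which
the `i`-th basis vector occurs `α i` times. -/
noncomputable def basisTuple {n : ℕ} (α : Fin n → ℕ) :
    Fin (∑ i, α i) → EuclideanSpace ℝ (Fin n) := fun k =>
  EuclideanSpace.single
    (((Fintype.equivFinOfCardEq (by simp) :
        (Σ i : Fin n, Fin (α i)) ≃ Fin (∑ i, α i))).symm k).1 1

/-- The iterated partial derivative `∂^α f x`. -/
noncomputable def pd {n : ℕ} (f : EuclideanSpace ℝ (Fin n) → ℂ) (α : Fin n → ℕ)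
    (x : EuclideanSpace ℝ (Fin n)) : ℂ :=
  iteratedFDeriv ℝ (∑ i, α i) f x (basisTuple α)


open Finset Function Filter Topology

section AuxSymm
variable {E F : Type*} [NormedAddCommGroup E] [NormedSpace ℝ E] [NormedAddCommGroup F]
  [NormedSpace ℝ F] {s : Set E} {f : E → F}
theorem itfd_comp_perm (hs : IsOpen s) (hf : ContDiffOn ℝ (⊤ : ℕ∞) f s) :
    ∀ (k : ℕ) (x : E), x ∈ s → ∀ (σ : Equiv.Perm (Fin k)) (v : Fin k → E),
      iteratedFDeriv ℝ k f x (v ∘ σ) = iteratedFDeriv ℝ k f x v := by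
  intro k
  induction k with
  | zero =>
    intro x hx σ v
    congr 1; funext j; exact j.elim0
  | succ k IH =>
    -- contDiffAt facts
    have hA : ∀ x ∈ s, ContDiffAt ℝ (⊤ : ℕ∞) f x := fun x hx => hf.contDiffAt (hs.mem_nhds hx)
    -- transposition with both indices nonzero
    have Hne : ∀ (a b : Fin (k+1)), a ≠ 0 → b ≠ 0 → ∀ x ∈ s, ∀ v : Fin (k+1) → E,
        iteratedFDeriv ℝ (k+1) f x (v ∘ Equiv.swap a b) = iteratedFDeriv ℝ (k+1) f x v := by
      intro a b ha hb x hx v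
      obtain ⟨a', rfl⟩ := Fin.exists_succ_eq_of_ne_zero ha
      obtain ⟨b', rfl⟩ := Fin.exists_succ_eq_of_ne_zero hb
      rw [iteratedFDeriv_succ_apply_left, iteratedFDeriv_succ_apply_left]
      have h0 : (v ∘ Equiv.swap a'.succ b'.succ) 0 = v 0 := by
        simp only [comp_apply]
        rw [Equiv.swap_apply_of_ne_of_ne (Fin.succ_ne_zero a').symm (Fin.succ_ne_zero b').symm]
      have htail : Fin.tail (v ∘ Equiv.swap a'.succ b'.succ)
          = (Fin.tail v) ∘ (Equiv.swap a' b') := by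
        funext j
        simp only [Fin.tail, comp_apply, Equiv.swap_apply_def, Fin.succ_inj]
        split_ifs <;> rfl
      rw [h0, htail]
      -- now use IH via domDomCongr
      set τ := Equiv.swap a' b' with hτ
      set Λ := ContinuousMultilinearMap.domDomCongrₗᵢ ℝ E F τ with hΛ
      have hev : (fun y => Λ (iteratedFDeriv ℝ k f y)) =ᶠ[nhds x] iteratedFDeriv ℝ k f := by
        filter_upwards [hs.mem_nhds hx] with y hy
        ext w
        exact IH y hy τ w
      have e2 : fderiv ℝ (fun y => Λ (iteratedFDeriv ℝ k f y)) x =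
          (Λ.toContinuousLinearEquiv : _ →L[ℝ] _).comp (fderiv ℝ (iteratedFDeriv ℝ k f) x) := by
        exact congrFun (LinearIsometryEquiv.comp_fderiv' Λ) x
      have e1 : fderiv ℝ (fun y => Λ (iteratedFDeriv ℝ k f y)) x
          = fderiv ℝ (iteratedFDeriv ℝ k f) x := hev.fderiv_eq
      have : Λ (fderiv ℝ (iteratedFDeriv ℝ k f) x (v 0)) = fderiv ℝ (iteratedFDeriv ℝ k f) x (v 0) := by
        have := congrArg (fun (L : _ →L[ℝ] _) => L (v 0)) (e2.symm.trans e1)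
        simpa using this
      exact congrArg (fun (m : ContinuousMultilinearMap ℝ (fun _ : Fin k => E) F) => m (Fin.tail v)) this
    -- swap 0 1
    have H01 : ∀ x ∈ s, ∀ v : Fin (k+1) → E,
        iteratedFDeriv ℝ (k+1) f x (v ∘ Equiv.swap 0 1) = iteratedFDeriv ℝ (k+1) f x v := by
      intro x hx v
      rcases k with _ | k'
      · have : Equiv.swap (0 : Fin 1) 1 = Equiv.refl _ := Subsingleton.elim _ _
        rw [this]; rfl
      · have key : ∀ w : Fin (k'+2) → E, iteratedFDeriv ℝ (k'+2) f x w =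
            fderiv ℝ (fderiv ℝ (iteratedFDeriv ℝ k' f)) x (w 0) (w 1) (Fin.tail (Fin.tail w)) := by
          intro w
          rw [iteratedFDeriv_succ_apply_left]
          have e : iteratedFDeriv ℝ (k'+1) f =
              (continuousMultilinearCurryLeftEquiv ℝ (fun _ : Fin (k'+1) => E) F).symm ∘
                fderiv ℝ (iteratedFDeriv ℝ k' f) := iteratedFDeriv_succ_eq_comp_left
          rw [e]
          have e2 := LinearIsometryEquiv.comp_fderiv (𝕜 := ℝ)
            (E := E →L[ℝ] ContinuousMultilinearMap ℝ (fun _ : Fin k' => E) F)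
            (F := ContinuousMultilinearMap ℝ (fun _ : Fin (k'+1) => E) F) (G := E)
            (continuousMultilinearCurryLeftEquiv ℝ (fun _ : Fin (k'+1) => E) F).symm
            (f := fderiv ℝ (iteratedFDeriv ℝ k' f)) (x := x)
          rw [e2]
          rfl
        have hsym : IsSymmSndFDerivAt ℝ (iteratedFDeriv ℝ k' f) x :=
          ContDiffAt.isSymmSndFDerivAt ((hA x hx).iteratedFDeriv_right (m := ((⊤ : ℕ∞) : WithTop ℕ∞)) (by rw [← WithTop.coe_natCast, ← WithTop.coe_add, top_add])) (by simp only [minSmoothness_of_isRCLikeNormedField]; exact WithTop.coe_le_coe.2 le_top)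
        rw [key, key]
        have h0 : (v ∘ Equiv.swap 0 1) 0 = v 1 := by simp
        have h1 : (v ∘ Equiv.swap 0 1) 1 = v 0 := by simp
        have htt : Fin.tail (Fin.tail (v ∘ Equiv.swap 0 1)) = Fin.tail (Fin.tail v) := by
          funext j
          simp only [Fin.tail, comp_apply]
          rw [Equiv.swap_apply_of_ne_of_ne (Fin.succ_ne_zero _) ?h1]
          case h1 =>
            show j.succ.succ ≠ (0 : Fin (k'+1)).succ
            rw [Ne, Fin.succ_inj]
            exact Fin.succ_ne_zero j
        rw [h0, h1, htt]
        exact congrArg (fun (m : ContinuousMultilinearMap ℝ (fun _ : Fin k' => E) F)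
          => m (Fin.tail (Fin.tail v))) (hsym (v 1) (v 0))
    -- arbitrary transposition
    have Htrans : ∀ (a b : Fin (k+1)), ∀ x ∈ s, ∀ v : Fin (k+1) → E,
        iteratedFDeriv ℝ (k+1) f x (v ∘ Equiv.swap a b) = iteratedFDeriv ℝ (k+1) f x v := by
      have key : ∀ (b : Fin (k+1)), b ≠ 0 → ∀ x ∈ s, ∀ v : Fin (k+1) → E,
          iteratedFDeriv ℝ (k+1) f x (v ∘ Equiv.swap 0 b) = iteratedFDeriv ℝ (k+1) f x v := by
        intro b hb x hx v
        rcases eq_or_ne b 1 with rfl | hb1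
        · exact H01 x hx v
        · have h10 : (1 : Fin (k+1)) ≠ 0 := by
            intro h
            have hk : k = 0 := by
              have h1 := congrArg Fin.val h
              simp [Fin.val_one'] at h1
              omega
            subst hk
            exact hb (Fin.fin_one_eq_zero b)
          have h0 : Equiv.swap (1 : Fin (k+1)) b 0 = 0 :=
            Equiv.swap_apply_of_ne_of_ne (Ne.symm h10) (Ne.symm hb)
          have h1 : Equiv.swap (1 : Fin (k+1)) b 1 = b := Equiv.swap_apply_left _ _
          have hdec : Equiv.swap (0 : Fin (k+1)) b
              = Equiv.swap 1 b * Equiv.swap 0 1 * Equiv.swap 1 b := by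
            have hcon := Equiv.swap_apply_apply (Equiv.swap (1 : Fin (k+1)) b) 0 1
            rw [h0, h1, Equiv.swap_inv] at hcon
            rw [hcon]
          have hcomp : v ∘ ⇑(Equiv.swap (0 : Fin (k+1)) b)
              = ((v ∘ Equiv.swap 1 b) ∘ Equiv.swap 0 1) ∘ Equiv.swap 1 b := by
            rw [hdec]; rfl
          rw [hcomp, Hne 1 b h10 hb x hx, H01 x hx, Hne 1 b h10 hb x hx]
      intro a b x hx v
      rcases eq_or_ne a b with rfl | hab
      · rw [Equiv.swap_self]; rfl
      rcases eq_or_ne a 0 with rfl | ha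
      · exact key b (Ne.symm hab) x hx v
      rcases eq_or_ne b 0 with rfl | hb0
      · rw [Equiv.swap_comm]; exact key a ha x hx v
      · exact Hne a b ha hb0 x hx v
    -- assemble via swap induction
    intro x hx σ
    refine Equiv.Perm.swap_induction_on σ (fun v => rfl) ?_
    intro σ' a b hab HP v
    have hcomp : v ∘ ⇑(Equiv.swap a b * σ') = (v ∘ Equiv.swap a b) ∘ σ' := rfl
    rw [hcomp, HP, Htrans a b x hx v]

end AuxSymm

section AuxComb
variable {n k : ℕ}


/-- fiber counts of `d` -/
def cnt (d : Fin k → Fin n) : Fin n → ℕ := fun i => (Finset.univ.filter fun j => d j = i).card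

theorem sum_cnt (d : Fin k → Fin n) : ∑ i, cnt d i = k := by
  have h := Finset.card_eq_sum_card_fiberwise
    (fun (x : Fin k) (_ : x ∈ Finset.univ) => Finset.mem_univ (d x))
  simpa [cnt] using h.symm

theorem prod_cnt {M : Type*} [CommMonoid M] (d : Fin k → Fin n) (g : Fin n → M) :
    ∏ j, g (d j) = ∏ i, g i ^ cnt d i := by
  rw [← Finset.prod_fiberwise_of_maps_to (fun x _ => Finset.mem_univ (d x)) (fun j => g (d j))]
  refine Finset.prod_congr rfl fun i _ => ?_
  rw [Finset.prod_congr rfl (fun j hj => by rw [(Finset.mem_filter.1 hj).2]), Finset.prod_const]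
  rfl

theorem cnt_comp_perm (d : Fin k → Fin n) (σ : Equiv.Perm (Fin k)) : cnt (d ∘ σ) = cnt d := by
  funext i
  rw [show cnt (d ∘ σ) i = Fintype.card {j // d (σ j) = i} from (Fintype.card_subtype _).symm,
    show cnt d i = Fintype.card {j // d j = i} from (Fintype.card_subtype _).symm]
  exact Fintype.card_congr (σ.subtypeEquiv fun j => Iff.rfl)

/-- fiber of the first projection of a sigma type -/
def sigFiber (β : Fin n → Type*) (i : Fin n) : {x : Σ j, β j // x.1 = i} ≃ β i where
  toFun x := cast (congrArg β x.2) x.1.2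
  invFun b := ⟨⟨i, b⟩, rfl⟩
  left_inv := by rintro ⟨⟨j, b⟩, rfl⟩; rfl
  right_inv b := rfl

/-- permutations carrying `d` to `d'` correspond to families of fiber bijections -/
def permFiber (d d' : Fin k → Fin n) :
    {σ : Equiv.Perm (Fin k) // d ∘ σ = d'} ≃ ((i : Fin n) → ({j // d' j = i} ≃ {j // d j = i})) where
  toFun σp i := σp.1.subtypeEquiv fun j => by
    rw [show d' j = d (σp.1 j) from (congrFun σp.2 j).symm]
  invFun F := ⟨(Equiv.sigmaFiberEquiv d').symm.trans ((Equiv.sigmaCongrRight F).trans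
      (Equiv.sigmaFiberEquiv d)), by
    funext j
    exact ((F (d' j)) ⟨j, rfl⟩).2⟩
  left_inv := by
    rintro ⟨σ, hσ⟩
    ext j
    rfl
  right_inv := by
    intro F
    funext i
    ext x
    obtain ⟨j, rfl⟩ := x
    rfl

theorem card_perm_fiber (d d' : Fin k → Fin n) (h : cnt d = cnt d') :
    (Finset.univ.filter fun σ : Equiv.Perm (Fin k) => d ∘ σ = d').card = ∏ i, Nat.factorial (cnt d i) := by
  rw [← Fintype.card_subtype]
  rw [Fintype.card_congr (permFiber d d')]
  rw [Fintype.card_pi]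
  refine Finset.prod_congr rfl fun i _ => ?_
  have c1 : Fintype.card {j // d' j = i} = cnt d i := by
    rw [Fintype.card_subtype]; exact (congrFun h i).symm ▸ rfl
  have c2 : Fintype.card {j // d j = i} = cnt d i := Fintype.card_subtype _
  rw [Fintype.card_equiv (Fintype.equivOfCardEq (c1.trans c2.symm)), c1]


theorem card_cnt (k : ℕ) (α : Fin n → ℕ) (h : ∑ i, α i = k) :
    (Finset.univ.filter fun d : Fin k → Fin n => cnt d = α).card * ∏ i, Nat.factorial (α i)
      = Nat.factorial k := by
  subst h
  set e := (Fintype.equivFinOfCardEq (by simp) : (Σ i : Fin n, Fin (α i)) ≃ Fin (∑ i, α i)) with he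
  set d₀ : Fin (∑ i, α i) → Fin n := fun j => (e.symm j).1 with hd₀def
  have hd₀ : cnt d₀ = α := by
    funext i
    have h1 : cnt d₀ i = Fintype.card {j // d₀ j = i} := (Fintype.card_subtype _).symm
    rw [h1, Fintype.card_congr ((e.symm.subtypeEquiv
      (fun j : Fin (∑ i, α i) => Iff.rfl)).trans (sigFiber (fun i' => Fin (α i')) i)),
      Fintype.card_fin]
  have main := Finset.card_eq_sum_card_fiberwise
    (f := fun σ : Equiv.Perm (Fin (∑ i, α i)) => d₀ ∘ σ)
    (s := Finset.univ) (t := Finset.univ.filter fun d => cnt d = α)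
    (fun σ _ => Finset.mem_filter.2 ⟨Finset.mem_univ _, by rw [cnt_comp_perm, hd₀]⟩)
  rw [Finset.card_univ, Fintype.card_perm, Fintype.card_fin] at main
  rw [main, Finset.sum_congr rfl fun d' hd' =>
    (card_perm_fiber d₀ d' (by rw [hd₀, (Finset.mem_filter.1 hd').2])).trans (by rw [hd₀]),
    Finset.sum_const, smul_eq_mul]


theorem pd_eq {f : EuclideanSpace ℝ (Fin n) → ℂ} {s : Set (EuclideanSpace ℝ (Fin n))}
    (hs : IsOpen s) (hf : ContDiffOn ℝ (⊤ : ℕ∞) f s) {x} (hx : x ∈ s) (k : ℕ) (α : Fin n → ℕ)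
    (hα : ∑ i, α i = k) (d : Fin k → Fin n) (hd : cnt d = α) :
    iteratedFDeriv ℝ k f x (fun j => EuclideanSpace.single (d j) 1) = pd f α x := by
  subst hα
  let eqA := Equiv.sigmaFiberEquiv d
  have hcard : ∀ i, Fintype.card {j // d j = i} = α i :=
    fun i => (Fintype.card_subtype _).trans (congrFun hd i)
  let eqB : ∀ i, {j // d j = i} ≃ Fin (α i) := fun i => Fintype.equivFinOfCardEq (hcard i)
  let E0 : (Σ i, Fin (α i)) ≃ Fin (∑ i, α i) := Fintype.equivFinOfCardEq (by simp)
  let σ : Equiv.Perm (Fin (∑ i, α i)) :=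
    (eqA.symm.trans ((Equiv.sigmaCongrRight eqB).trans E0))
  have hbt : basisTuple α ∘ σ = fun j => EuclideanSpace.single (d j) 1 := by
    funext j
    show EuclideanSpace.single ((E0.symm (σ j)).1) 1 = _
    have h1 : E0.symm (σ j) = Equiv.sigmaCongrRight eqB (eqA.symm j) := by
      simp [σ, E0]
    rw [h1]
    have h2 : (Equiv.sigmaCongrRight eqB (eqA.symm j)).1 = (eqA.symm j).1 := rfl
    have h3 : (eqA.symm j).1 = d j := rfl
    rw [show (Equiv.sigmaCongrRight eqB (eqA.symm j)).1 = d j from h2.trans h3]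
  rw [← hbt]
  exact itfd_comp_perm hs hf _ x hx σ (basisTuple α)

end AuxComb

/-- `C^{ω,r}(B(0,r)) ⊆ 𝒜^{n,r}`, with convergence of the Taylor
series.  If `f` is `C^∞` on `B(0,r) ⊆ ℝⁿ` with `‖∂^α f‖ ≤ m α` on `B(0,r)` and
`∑_α m α · r^{|α|}/α! < ∞`, then for every `t ∈ B(0,r)` the Taylor series of `f` at `0`
converges to `f t`, and with `c_α := ∂^α f(0)` the family `α ↦ ‖c_α‖ r^{|α|}/α!` is
summable with sum at most `∑_α m α · r^{|α|}/α!`. -/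
theorem comega_subset_A (n : ℕ) (r : ℝ) (hr : 0 < r)
    (f : EuclideanSpace ℝ (Fin n) → ℂ)
    (hf : ContDiffOn ℝ (⊤ : ℕ∞) f (ball (0 : EuclideanSpace ℝ (Fin n)) r))
    (m : (Fin n → ℕ) → ℝ)
    (hm : ∀ (α : Fin n → ℕ), ∀ x ∈ ball (0 : EuclideanSpace ℝ (Fin n)) r,
      ‖pd f α x‖ ≤ m α)
    (hsum : Summable fun α : Fin n → ℕ =>
      m α * r ^ (∑ i, α i) / ∏ i, (Nat.factorial (α i) : ℝ)) :
    (∀ t ∈ ball (0 : EuclideanSpace ℝ (Fin n)) r,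
      Summable (fun α : Fin n → ℕ =>
        pd f α 0 * ((∏ i, (t i) ^ (α i) : ℝ) : ℂ) /
          ((∏ i, Nat.factorial (α i) : ℕ) : ℂ)) ∧
      f t = ∑' α : Fin n → ℕ,
        pd f α 0 * ((∏ i, (t i) ^ (α i) : ℝ) : ℂ) /
          ((∏ i, Nat.factorial (α i) : ℕ) : ℂ)) ∧
    (Summable fun α : Fin n → ℕ =>
      ‖pd f α 0‖ * r ^ (∑ i, α i) / ∏ i, (Nat.factorial (α i) : ℝ)) ∧
    (∑' α : Fin n → ℕ, ‖pd f α 0‖ * r ^ (∑ i, α i) / ∏ i, (Nat.factorial (α i) : ℝ)) ≤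
      ∑' α : Fin n → ℕ, m α * r ^ (∑ i, α i) / ∏ i, (Nat.factorial (α i) : ℝ) := by
  have h0mem : (0 : EuclideanSpace ℝ (Fin n)) ∈ ball (0 : EuclideanSpace ℝ (Fin n)) r :=
    mem_ball_self hr
  have hm0 : ∀ α, 0 ≤ m α := fun α => le_trans (norm_nonneg _) (hm α 0 h0mem)
  have hfac_pos : ∀ α : Fin n → ℕ, (0:ℝ) < ∏ i, (Nat.factorial (α i) : ℝ) :=
    fun α => Finset.prod_pos fun i _ => Nat.cast_pos.2 (Nat.factorial_pos _)
  have hterm_le : ∀ α : Fin n → ℕ,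
      ‖pd f α 0‖ * r ^ (∑ i, α i) / ∏ i, (Nat.factorial (α i) : ℝ) ≤
      m α * r ^ (∑ i, α i) / ∏ i, (Nat.factorial (α i) : ℝ) := by
    intro α
    gcongr
    · exact hm α 0 h0mem
  have hterm_nonneg : ∀ α : Fin n → ℕ,
      0 ≤ ‖pd f α 0‖ * r ^ (∑ i, α i) / ∏ i, (Nat.factorial (α i) : ℝ) := by
    intro α; positivity
  have hsum2 : Summable (fun α : Fin n → ℕ =>
      ‖pd f α 0‖ * r ^ (∑ i, α i) / ∏ i, (Nat.factorial (α i) : ℝ)) :=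
    Summable.of_nonneg_of_le hterm_nonneg hterm_le hsum
  refine ⟨?_, hsum2, hsum2.tsum_le_tsum hterm_le hsum⟩
  intro t htmem
  have ht : ‖t‖ < r := mem_ball_zero_iff.1 htmem
  have habs : ∀ i, |t i| ≤ ‖t‖ := by
    intro i
    rw [EuclideanSpace.norm_eq]
    calc |t i| = Real.sqrt ((t i) ^ 2) := (Real.sqrt_sq_eq_abs _).symm
    _ ≤ Real.sqrt (∑ j, ‖t j‖ ^ 2) := by
        apply Real.sqrt_le_sqrt
        have h2 : (t i) ^ 2 = ‖t i‖ ^ 2 := by rw [Real.norm_eq_abs, sq_abs]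
        rw [h2]
        exact Finset.single_le_sum (fun j _ => sq_nonneg ‖t j‖) (Finset.mem_univ i)
  have hprod_le : ∀ α : Fin n → ℕ, |∏ i, t i ^ α i| ≤ r ^ (∑ i, α i) := by
    intro α
    rw [Finset.abs_prod, ← Finset.prod_pow_eq_pow_sum]
    apply Finset.prod_le_prod (fun i _ => abs_nonneg _)
    intro i _
    rw [abs_pow]
    exact pow_le_pow_left₀ (abs_nonneg _) ((habs i).trans ht.le) _
  have hnorm_u : ∀ α : Fin n → ℕ,
      ‖pd f α 0 * ((∏ i, (t i) ^ (α i) : ℝ) : ℂ) / ((∏ i, Nat.factorial (α i) : ℕ) : ℂ)‖ ≤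
      m α * r ^ (∑ i, α i) / ∏ i, (Nat.factorial (α i) : ℝ) := by
    intro α
    rw [norm_div, norm_mul, Complex.norm_real, Real.norm_eq_abs]
    have h1 : ‖((∏ i, Nat.factorial (α i) : ℕ) : ℂ)‖ = ∏ i, (Nat.factorial (α i) : ℝ) := by
      rw [show ((∏ i, Nat.factorial (α i) : ℕ) : ℂ) = ((∏ i, (Nat.factorial (α i) : ℝ) : ℝ) : ℂ)
        by push_cast; ring, Complex.norm_real, Real.norm_eq_abs, abs_of_pos (hfac_pos α)]
    rw [h1]
    gcongr
    · exact hm0 α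
    · exact hm α 0 h0mem
    · exact hprod_le α
  have hu_sum : Summable (fun α : Fin n → ℕ =>
      pd f α 0 * ((∏ i, (t i) ^ (α i) : ℝ) : ℂ) / ((∏ i, Nat.factorial (α i) : ℕ) : ℂ)) :=
    Summable.of_norm_bounded hsum hnorm_u
  refine ⟨hu_sum, ?_⟩
  -- finsets of multi-indices
  set SK : ℕ → Finset (Fin n → ℕ) := fun k =>
    (Fintype.piFinset fun _ : Fin n => Finset.range (k+1)).filter (fun α => ∑ i, α i = k)
    with hSK
  have hSK_mem : ∀ k (α : Fin n → ℕ), α ∈ SK k ↔ ∑ i, α i = k := by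
    intro k α
    rw [hSK]
    simp only [Finset.mem_filter, Fintype.mem_piFinset, Finset.mem_range]
    constructor
    · exact fun h => h.2
    · intro h
      refine ⟨fun i => ?_, h⟩
      have : α i ≤ ∑ j, α j := Finset.single_le_sum (fun j _ => Nat.zero_le _) (Finset.mem_univ i)
      omega
  -- diagonal expansion of the iterated derivative
  have Hdiag : ∀ x ∈ ball (0 : EuclideanSpace ℝ (Fin n)) r, ∀ k : ℕ,
      iteratedFDeriv ℝ k f x (fun _ => t)
        = ∑ d : Fin k → Fin n, (∏ j, t (d j)) • pd f (cnt d) x := by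
    intro x hx k
    have hteq : (fun _ : Fin k => t)
        = fun _ : Fin k => ∑ i, t i • (EuclideanSpace.single i (1:ℝ)) := by
      funext _
      apply PiLp.ext
      intro j
      rw [WithLp.ofLp_sum]
      simp [EuclideanSpace.single_apply, Pi.single_apply]
    rw [hteq, ContinuousMultilinearMap.map_sum]
    refine Finset.sum_congr rfl fun d _ => ?_
    rw [ContinuousMultilinearMap.map_smul_univ]
    rw [pd_eq isOpen_ball hf hx k (cnt d) (sum_cnt d) d rfl]
  -- grouped expansion
  have Hgroup : ∀ x ∈ ball (0 : EuclideanSpace ℝ (Fin n)) r, ∀ k : ℕ,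
      iteratedFDeriv ℝ k f x (fun _ => t)
        = ∑ α ∈ SK k, ((Finset.univ.filter fun d : Fin k → Fin n => cnt d = α).card : ℝ) •
            ((∏ i, t i ^ α i) • pd f α x) := by
    intro x hx k
    rw [Hdiag x hx k]
    rw [← Finset.sum_fiberwise_of_maps_to (g := fun d : Fin k → Fin n => cnt d)
      (fun d _ => (hSK_mem k (cnt d)).2 (sum_cnt d))]
    refine Finset.sum_congr rfl fun α _ => ?_
    rw [Finset.sum_congr rfl (fun d hd => ?_), Finset.sum_const, ← Nat.cast_smul_eq_nsmul ℝ]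
    have hcd : cnt d = α := (Finset.mem_filter.1 hd).2
    rw [prod_cnt d t, hcd]
  -- uniform bound on the diagonal derivatives
  set θ := ‖t‖ / r with hθdef
  have hθ0 : 0 ≤ θ := div_nonneg (norm_nonneg _) hr.le
  have hθ1 : θ < 1 := (div_lt_one hr).2 ht
  set M := ∑' α : Fin n → ℕ, m α * r ^ (∑ i, α i) / ∏ i, (Nat.factorial (α i) : ℝ) with hMdef
  have hterm0 : ∀ α : Fin n → ℕ, 0 ≤ m α * r ^ (∑ i, α i) / ∏ i, (Nat.factorial (α i) : ℝ) :=
    fun α => div_nonneg (mul_nonneg (hm0 α) (by positivity)) (hfac_pos α).le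
  have hM0 : 0 ≤ M := tsum_nonneg hterm0
  have Hbound : ∀ x ∈ ball (0 : EuclideanSpace ℝ (Fin n)) r, ∀ k : ℕ,
      ‖iteratedFDeriv ℝ k f x (fun _ => t)‖ ≤ (Nat.factorial k : ℝ) * θ ^ k * M := by
    intro x hx k
    have key : ∀ α ∈ SK k,
        ((Finset.univ.filter fun d : Fin k → Fin n => cnt d = α).card : ℝ) *
          (|∏ i, t i ^ α i| * m α) ≤
        (Nat.factorial k : ℝ) * θ ^ k *
          (m α * r ^ (∑ i, α i) / ∏ i, (Nat.factorial (α i) : ℝ)) := by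
      intro α hα
      have hsumα := (hSK_mem k α).1 hα
      have hcard : ((Finset.univ.filter fun d : Fin k → Fin n => cnt d = α).card : ℝ)
          = (Nat.factorial k : ℝ) / ∏ i, (Nat.factorial (α i) : ℝ) := by
        rw [eq_div_iff (hfac_pos α).ne']
        exact_mod_cast congrArg (fun z : ℕ => (z : ℝ)) (card_cnt k α hsumα)
      have hp : |∏ i, t i ^ α i| ≤ ‖t‖ ^ k := by
        rw [Finset.abs_prod, ← hsumα, ← Finset.prod_pow_eq_pow_sum]
        refine Finset.prod_le_prod (fun i _ => abs_nonneg _) (fun i _ => ?_)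
        rw [abs_pow]
        exact pow_le_pow_left₀ (abs_nonneg _) (habs i) _
      have htk : ‖t‖ ^ k = θ ^ k * r ^ k := by
        rw [← mul_pow]
        congr 1
        rw [hθdef, div_mul_cancel₀ _ hr.ne']
      calc ((Finset.univ.filter fun d : Fin k → Fin n => cnt d = α).card : ℝ) *
            (|∏ i, t i ^ α i| * m α)
          ≤ ((Finset.univ.filter fun d : Fin k → Fin n => cnt d = α).card : ℝ) *
            (‖t‖ ^ k * m α) := by
            gcongr
            exact hm0 α
        _ = (Nat.factorial k : ℝ) * θ ^ k *
            (m α * r ^ (∑ i, α i) / ∏ i, (Nat.factorial (α i) : ℝ)) := by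
            rw [hcard, htk, hsumα]
            field_simp
    calc ‖iteratedFDeriv ℝ k f x (fun _ => t)‖
        ≤ ∑ α ∈ SK k, ‖((Finset.univ.filter fun d : Fin k → Fin n => cnt d = α).card : ℝ) •
            ((∏ i, t i ^ α i) • pd f α x)‖ := by
          rw [Hgroup x hx k]; exact norm_sum_le _ _
      _ = ∑ α ∈ SK k, ((Finset.univ.filter fun d : Fin k → Fin n => cnt d = α).card : ℝ) *
            (|∏ i, t i ^ α i| * ‖pd f α x‖) := by
          refine Finset.sum_congr rfl fun α _ => ?_
          rw [norm_smul, norm_smul, Real.norm_eq_abs, Real.norm_eq_abs,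
            abs_of_nonneg (Nat.cast_nonneg _)]
      _ ≤ ∑ α ∈ SK k, ((Finset.univ.filter fun d : Fin k → Fin n => cnt d = α).card : ℝ) *
            (|∏ i, t i ^ α i| * m α) := by
          refine Finset.sum_le_sum fun α _ => ?_
          gcongr
          · exact hm α x hx
      _ ≤ ∑ α ∈ SK k, (Nat.factorial k : ℝ) * θ ^ k *
            (m α * r ^ (∑ i, α i) / ∏ i, (Nat.factorial (α i) : ℝ)) :=
          Finset.sum_le_sum key
      _ = (Nat.factorial k : ℝ) * θ ^ k *
            ∑ α ∈ SK k, (m α * r ^ (∑ i, α i) / ∏ i, (Nat.factorial (α i) : ℝ)) := by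
          rw [Finset.mul_sum]
      _ ≤ (Nat.factorial k : ℝ) * θ ^ k * M := by
          have hpos : (0:ℝ) ≤ (Nat.factorial k : ℝ) * θ ^ k := by positivity
          exact mul_le_mul_of_nonneg_left
            (hsum.sum_le_tsum (SK k) (fun α _ => hterm0 α)) hpos
  -- the function along the segment
  set L : ℝ →L[ℝ] EuclideanSpace ℝ (Fin n) := ContinuousLinearMap.toSpanSingleton ℝ t with hLdef
  have hLu : ∀ u : ℝ, L u = u • t := fun u => rfl
  have hsm : ∀ u ∈ Set.Icc (0:ℝ) 1, u • t ∈ ball (0 : EuclideanSpace ℝ (Fin n)) r := by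
    intro u hu
    rw [mem_ball_zero_iff, norm_smul]
    calc ‖u‖ * ‖t‖ ≤ 1 * ‖t‖ := by
          gcongr
          rw [Real.norm_eq_abs, abs_le]
          exact ⟨by linarith [hu.1], hu.2⟩
    _ < r := by rw [one_mul]; exact ht
  set O := L ⁻¹' (ball (0 : EuclideanSpace ℝ (Fin n)) r) with hOdef
  have hO : IsOpen O := isOpen_ball.preimage L.continuous
  have hIccO : Set.Icc (0:ℝ) 1 ⊆ O := by
    intro u hu
    rw [hOdef, Set.mem_preimage, hLu]
    exact hsm u hu
  have hg : ContDiffOn ℝ (⊤ : ℕ∞) (f ∘ L) O := hf.comp_continuousLinearMap L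
  -- derivative identification
  have Hderiv : ∀ u ∈ Set.Icc (0:ℝ) 1, ∀ k : ℕ,
      iteratedDerivWithin k (f ∘ L) (Set.Icc 0 1) u
        = iteratedFDeriv ℝ k f (u • t) (fun _ => t) := by
    intro u hu k
    have h2 : iteratedFDerivWithin ℝ k (f ∘ L) (Set.Icc 0 1) u
        = iteratedFDerivWithin ℝ k (f ∘ L) O u := by
      have hTay := (hg.ftaylorSeriesWithin hO.uniqueDiffOn).mono hIccO
      exact (hTay.eq_iteratedFDerivWithin_of_uniqueDiffOn (by exact_mod_cast le_top)
        (uniqueDiffOn_Icc one_pos) hu).symm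
    have h3 : iteratedFDerivWithin ℝ k (f ∘ L) O u
        = (iteratedFDerivWithin ℝ k f (ball 0 r) (L u)).compContinuousLinearMap
            (fun _ => L) :=
      L.iteratedFDerivWithin_comp_right hf isOpen_ball.uniqueDiffOn
        (hOdef ▸ hO.uniqueDiffOn) (by rw [hLu]; exact hsm u hu) (by exact_mod_cast le_top)
    rw [iteratedDerivWithin_eq_iteratedFDerivWithin, h2, h3]
    rw [iteratedFDerivWithin_of_isOpen k isOpen_ball (by rw [hLu]; exact hsm u hu)]
    have happ : (iteratedFDeriv ℝ k f (L u)).compContinuousLinearMap (fun _ => L)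
        (fun _ => (1:ℝ)) = iteratedFDeriv ℝ k f (L u) (fun _ => L 1) := rfl
    rw [happ, hLu u]
    congr 1
    funext _
    rw [hLu 1, one_smul]
  -- Taylor remainder estimate
  have Hrem : ∀ N : ℕ, ‖f t - taylorWithinEval (f ∘ L) N (Set.Icc 0 1) 0 1‖
      ≤ ((N+1 : ℕ) : ℝ) * θ ^ (N+1) * M := by
    intro N
    have hf' : ContDiffOn ℝ (N+1 : ℕ) (f ∘ L) (Set.Icc 0 1) := (hg.of_le (by exact_mod_cast le_top)).mono hIccO
    have hC : ∀ y ∈ Set.Icc (0:ℝ) 1, ‖iteratedDerivWithin (N+1) (f ∘ L) (Set.Icc 0 1) y‖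
        ≤ (Nat.factorial (N+1) : ℝ) * θ ^ (N+1) * M := by
      intro y hy
      rw [Hderiv y hy (N+1)]
      exact Hbound _ (hsm y hy) (N+1)
    have hbd := taylor_mean_remainder_bound zero_le_one hf' (Set.right_mem_Icc.2 zero_le_one) hC
    have hL1 : (f ∘ L) 1 = f t := by
      rw [comp_apply, hLu 1, one_smul]
    rw [hL1] at hbd
    refine hbd.trans (le_of_eq ?_)
    rw [sub_zero, one_pow, mul_one, Nat.factorial_succ]
    push_cast
    field_simp [Nat.factorial_ne_zero]
  -- partial sums of the Taylor polynomial
  have Hpart : ∀ N : ℕ, taylorWithinEval (f ∘ L) N (Set.Icc 0 1) 0 1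
      = ∑ k ∈ Finset.range (N+1), ∑ α ∈ SK k,
          (pd f α 0 * ((∏ i, (t i) ^ (α i) : ℝ) : ℂ) /
            ((∏ i, Nat.factorial (α i) : ℕ) : ℂ)) := by
    intro N
    rw [taylor_within_apply]
    refine Finset.sum_congr rfl fun k hk => ?_
    have h0Icc : (0:ℝ) ∈ Set.Icc (0:ℝ) 1 := Set.left_mem_Icc.2 zero_le_one
    rw [Hderiv 0 h0Icc k, zero_smul, Hgroup 0 h0mem k, Finset.smul_sum]
    refine Finset.sum_congr rfl fun α hα => ?_
    have hsumα := (hSK_mem k α).1 hα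
    have hcard : ((Finset.univ.filter fun d : Fin k → Fin n => cnt d = α).card : ℝ)
        = (Nat.factorial k : ℝ) / ∏ i, (Nat.factorial (α i) : ℝ) := by
      rw [eq_div_iff (hfac_pos α).ne']
      exact_mod_cast congrArg (fun z : ℕ => (z : ℝ)) (card_cnt k α hsumα)
    rw [smul_smul, smul_smul]
    have hcoef : ((Nat.factorial k : ℝ))⁻¹ * (1 - 0 : ℝ) ^ k *
        ((Finset.univ.filter fun d : Fin k → Fin n => cnt d = α).card : ℝ) *
        (∏ i, t i ^ α i)
        = (∏ i, t i ^ α i) / ∏ i, (Nat.factorial (α i) : ℝ) := by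
      rw [hcard, sub_zero, one_pow]
      field_simp
    rw [hcoef]
    rw [Complex.real_smul]
    have hcast : ((∏ i, Nat.factorial (α i) : ℕ) : ℂ)
        = ((∏ i, (Nat.factorial (α i) : ℝ) : ℝ) : ℂ) := by push_cast; ring
    rw [hcast]
    push_cast
    rw [div_eq_mul_inv, div_eq_mul_inv]
    ring
  -- exhausting finsets
  set T : ℕ → Finset (Fin n → ℕ) := fun N =>
    (Fintype.piFinset fun _ : Fin n => Finset.range (N+1)).filter (fun α => ∑ i, α i ≤ N)
    with hT
  have hT_mem : ∀ N (α : Fin n → ℕ), α ∈ T N ↔ ∑ i, α i ≤ N := by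
    intro N α
    rw [hT]
    simp only [Finset.mem_filter, Fintype.mem_piFinset, Finset.mem_range]
    constructor
    · exact fun h => h.2
    · intro h
      refine ⟨fun i => ?_, h⟩
      have : α i ≤ ∑ j, α j := Finset.single_le_sum (fun j _ => Nat.zero_le _) (Finset.mem_univ i)
      omega
  have hTpart : ∀ N : ℕ, ∑ α ∈ T N,
      (pd f α 0 * ((∏ i, (t i) ^ (α i) : ℝ) : ℂ) / ((∏ i, Nat.factorial (α i) : ℕ) : ℂ))
      = ∑ k ∈ Finset.range (N+1), ∑ α ∈ SK k,
        (pd f α 0 * ((∏ i, (t i) ^ (α i) : ℝ) : ℂ) / ((∏ i, Nat.factorial (α i) : ℕ) : ℂ)) := by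
    intro N
    rw [← Finset.sum_fiberwise_of_maps_to (g := fun α : Fin n → ℕ => ∑ i, α i)
      (fun α hα => Finset.mem_range.2 (Nat.lt_succ_of_le ((hT_mem N α).1 hα)))]
    refine Finset.sum_congr rfl fun k hk => ?_
    refine Finset.sum_congr ?_ (fun _ _ => rfl)
    ext α
    rw [Finset.mem_filter, hT_mem, hSK_mem]
    constructor
    · exact fun h => h.2
    · intro h
      have hkN : k ≤ N := Nat.lt_succ_iff.1 (Finset.mem_range.1 hk)
      exact ⟨h ▸ hkN, h⟩
  have hmono : Monotone T := by
    intro a b hab α hα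
    exact (hT_mem b α).2 (le_trans ((hT_mem a α).1 hα) hab)
  have hexh : Filter.Tendsto T Filter.atTop Filter.atTop :=
    tendsto_atTop_finset_of_monotone hmono (fun α => ⟨∑ i, α i, (hT_mem _ α).2 le_rfl⟩)
  have hlim1 : Filter.Tendsto (fun N => ∑ α ∈ T N,
      (pd f α 0 * ((∏ i, (t i) ^ (α i) : ℝ) : ℂ) / ((∏ i, Nat.factorial (α i) : ℕ) : ℂ)))
      Filter.atTop (𝓝 (∑' α : Fin n → ℕ,
      (pd f α 0 * ((∏ i, (t i) ^ (α i) : ℝ) : ℂ) / ((∏ i, Nat.factorial (α i) : ℕ) : ℂ)))) :=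
    hu_sum.hasSum.comp hexh
  -- remainder tends to 0
  have hθn : ‖θ‖ < 1 := by rw [Real.norm_eq_abs, abs_of_nonneg hθ0]; exact hθ1
  have h1 : Filter.Tendsto (fun N : ℕ => (N:ℝ)^1 * θ^N) Filter.atTop (𝓝 0) :=
    (summable_pow_mul_geometric_of_norm_lt_one 1 hθn).tendsto_atTop_zero
  have h2 := (h1.mul_const M).comp (tendsto_add_atTop_nat 1)
  rw [zero_mul] at h2
  have hfun : ((fun N : ℕ => (N:ℝ)^1 * θ^N * M) ∘ (fun N : ℕ => N + 1))
      = fun N : ℕ => ((N+1 : ℕ) : ℝ) * θ^(N+1) * M := by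
    funext N
    simp only [comp_apply, pow_one]
  rw [hfun] at h2
  -- Taylor polynomials tend to f t
  have hlim2 : Filter.Tendsto (fun N => taylorWithinEval (f ∘ L) N (Set.Icc 0 1) 0 1)
      Filter.atTop (𝓝 (f t)) := by
    rw [tendsto_iff_norm_sub_tendsto_zero]
    refine squeeze_zero (fun N => norm_nonneg _) (fun N => ?_) h2
    rw [norm_sub_rev]
    exact Hrem N
  have hEq : (fun N => ∑ α ∈ T N,
      (pd f α 0 * ((∏ i, (t i) ^ (α i) : ℝ) : ℂ) / ((∏ i, Nat.factorial (α i) : ℕ) : ℂ)))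
      = fun N => taylorWithinEval (f ∘ L) N (Set.Icc 0 1) 0 1 := by
    funext N
    rw [hTpart N, ← Hpart N]
  rw [hEq] at hlim1
  exact tendsto_nhds_unique hlim2 hlim1
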